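/- Let f be an inner function with f(0)=0 that is not a rotation, and let ε_1 ∈ {1,−1}. Let n_1,n_2,n_3,n_4 be positive integers with max{n_1,n_2} < min{n_3,n_4}. Then ∫_{∂𝔻} f^{ε_1 n_1}·f^{−ε_1 n_2}·f^{n_3}·f^{n_4} dm = 0. -/

import Mathlib

open MeasureTheory Set Metric Filter Complex

/-- Normalized Lebesgue (arc-length) measure on the unit circle, as a measure on ℂ. -/
noncomputable def m : Measure ℂ :=
  (ENNReal.ofReal (2 * Real.pi))⁻¹ •
    (Measure.map (fun θ : ℝ => Complex.exp ((θ : ℂ) * Complex.I))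
      (volume.restrict (Set.Ioc (0:ℝ) (2 * Real.pi))))

/-- `spow F ε n` is `F^[n]` if `ε = 1` and its complex conjugate if `ε = -1`. -/
noncomputable def spow (F : ℂ → ℂ) (ε : ℤ) (n : ℕ) (z : ℂ) : ℂ :=
  if ε = 1 then F^[n] z else (starRingEnd ℂ) (F^[n] z)

/-!
Write `c = f'(0)`. Radial limits and the mean value property give the moments `∫ F^n = 0`,
`∫ z F^n = 0` and `∫ conj z F^n = c [n = 1]`; since `|F| = 1`, every trigonometric monomial in `F`
then has the same integral as the one in `z`, also after multiplication by `z` up to the factor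
`conj c`. Stone–Weierstrass and the density of continuous functions in `L¹` upgrade this to:
`F` preserves `m`, and `∫ z ψ(F z) dm = conj c ∫ z ψ dm` for every integrable `ψ`.
Substituting `w = F^[min a b] z` and applying this identity `|a - b|` times (or its conjugate)
turns the integral into a multiple of `∫ F^[p'] F^[q']`, which vanishes because
`∫ z F^[s] z = (conj c)^s ∫ z² = 0`.
-/

open scoped ComplexConjugate Topology

lemma measurable_exp_mul_I : Measurable fun θ : ℝ => exp (θ * I) := by fun_prop

lemma ae_norm_eq_one_map_exp_mul_I (μ : Measure ℝ) :
    ∀ᵐ z ∂(μ.map fun θ : ℝ => exp (θ * I)), ‖z‖ = 1 := by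
  rw [ae_map_iff measurable_exp_mul_I.aemeasurable
    (measurableSet_eq_fun measurable_norm measurable_const)]
  exact Eventually.of_forall fun θ => by simp [norm_exp]

lemma m_ae_norm_eq_one : ∀ᵐ z ∂m, ‖z‖ = 1 :=
  Measure.ae_smul_measure (ae_norm_eq_one_map_exp_mul_I _) _

instance : IsProbabilityMeasure m := by
  constructor
  rw [m, Measure.smul_apply, Measure.map_apply measurable_exp_mul_I MeasurableSet.univ]
  simp only [Real.volume_Ioc, Measure.restrict_apply MeasurableSet.univ, preimage_univ,
    univ_inter, sub_zero, smul_eq_mul]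
  exact ENNReal.inv_mul_cancel (by simp [Real.pi_pos]) ENNReal.ofReal_ne_top

lemma aestronglyMeasurable_of_continuousOn_sphere {μ : Measure ℂ} (hμ : ∀ᵐ z ∂μ, ‖z‖ = 1)
    {φ : ℂ → ℂ} (hφ : ContinuousOn φ (sphere 0 1)) : AEStronglyMeasurable φ μ := by
  have hμ : μ.restrict (sphere 0 1) = μ :=
    Measure.restrict_eq_self_of_ae_mem (by simpa only [mem_sphere_zero_iff_norm] using hμ)
  exact hμ ▸ hφ.aestronglyMeasurable isClosed_sphere.measurableSet

lemma integral_m_eq_circleAverage {φ : ℂ → ℂ} (hφ : ContinuousOn φ (sphere 0 1)) :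
    ∫ z, φ z ∂m = Real.circleAverage φ 0 1 := by
  rw [m, integral_smul_measure, integral_map measurable_exp_mul_I.aemeasurable
    (aestronglyMeasurable_of_continuousOn_sphere (ae_norm_eq_one_map_exp_mul_I _) hφ),
    ← intervalIntegral.integral_of_le Real.two_pi_pos.le, Real.circleAverage,
    ENNReal.toReal_inv, ENNReal.toReal_ofReal Real.two_pi_pos.le]
  simp [circleMap_zero]

lemma DiffContOnCl.continuousOn_sphere {φ : ℂ → ℂ} (hφ : DiffContOnCl ℂ φ (ball 0 1)) :
    ContinuousOn φ (sphere 0 1) :=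
  hφ.continuousOn.mono (closure_ball (0 : ℂ) one_ne_zero ▸ sphere_subset_closedBall)

lemma integral_m_eq_apply_zero {φ : ℂ → ℂ} (hφ : DiffContOnCl ℂ φ (ball 0 1)) :
    ∫ z, φ z ∂m = φ 0 := by
  rw [integral_m_eq_circleAverage hφ.continuousOn_sphere,
    DiffContOnCl.circleAverage (by simpa using hφ)]

lemma integral_m_conj_mul_eq_deriv {φ : ℂ → ℂ} (hφ : DiffContOnCl ℂ φ (ball 0 1)) :
    ∫ z, conj z * φ z ∂m = deriv φ 0 := by
  have hcont : ContinuousOn (fun z => conj z * φ z) (sphere 0 1) :=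
    continuous_conj.continuousOn.mul hφ.continuousOn_sphere
  -- on the unit circle `z⁻¹ * conj z = z⁻¹ ^ 2`, which turns the average into Cauchy's formula
  have hcauchy : ∮ z in C(0, 1), (z - 0)⁻¹ • (conj z * φ z) =
      ∮ z in C(0, 1), (1 / (z - 0) ^ 2) • φ z := by
    refine circleIntegral.integral_congr zero_le_one fun z hz => ?_
    rw [← inv_eq_conj (by simpa using hz)]
    simp only [smul_eq_mul, sub_zero]
    ring
  rw [integral_m_eq_circleAverage hcont, Real.circleAverage_eq_circleIntegral one_ne_zero, hcauchy,
    hφ.deriv_eq_smul_circleIntegral one_pos, smul_smul,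
    inv_mul_cancel₀ (by simp [Real.pi_ne_zero]), one_smul]


section RadialLimits

variable {g G : ℂ → ℂ}

lemma mapsTo_ofReal_mul_closedBall {r : ℝ} (hr0 : 0 ≤ r) (hr1 : r < 1) :
    MapsTo (fun z : ℂ => (r : ℂ) * z) (closedBall 0 1) (ball 0 1) := fun z hz => by
  rw [mem_closedBall_zero_iff] at hz
  rw [mem_ball_zero_iff, norm_mul, norm_real, Real.norm_of_nonneg hr0]
  nlinarith [norm_nonneg z]

lemma DifferentiableOn.diffContOnCl_comp_ofReal_mul (hg : DifferentiableOn ℂ g (ball 0 1))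
    {r : ℝ} (hr0 : 0 ≤ r) (hr1 : r < 1) :
    DiffContOnCl ℂ (fun z => g (r * z)) (ball 0 1) :=
  DifferentiableOn.diffContOnCl <| closure_ball (0 : ℂ) one_ne_zero ▸
    hg.comp (by fun_prop) (mapsTo_ofReal_mul_closedBall hr0 hr1)

lemma aestronglyMeasurable_comp_ofReal_mul (hg : ContinuousOn g (ball 0 1))
    {r : ℝ} (hr0 : 0 ≤ r) (hr1 : r < 1) : AEStronglyMeasurable (fun z => g (r * z)) m :=
  aestronglyMeasurable_of_continuousOn_sphere m_ae_norm_eq_one <| hg.comp (by fun_prop)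
    ((mapsTo_ofReal_mul_closedBall hr0 hr1).mono_left sphere_subset_closedBall)

lemma aestronglyMeasurable_of_tendsto_radial (hg : ContinuousOn g (ball 0 1))
    (hG : ∀ᵐ z ∂m, Tendsto (fun r : ℝ => g (r * z)) (𝓝[<] 1) (𝓝 (G z))) :
    AEStronglyMeasurable G m := by
  obtain ⟨r, -, hr, hlim⟩ := exists_seq_strictMono_tendsto' (zero_lt_one' ℝ)
  have hr' : Tendsto r atTop (𝓝[<] 1) :=
    tendsto_nhdsWithin_of_tendsto_nhds_of_eventually_within _ hlim
      (Eventually.of_forall fun n => (hr n).2)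
  exact aestronglyMeasurable_of_tendsto_ae atTop
    (fun n => aestronglyMeasurable_comp_ofReal_mul hg (hr n).1.le (hr n).2)
    (hG.mono fun z hz => hz.comp hr')

lemma tendsto_integral_mul_comp_ofReal_mul {v : ℂ → ℂ} (hv : AEStronglyMeasurable v m)
    (hv1 : ∀ᵐ z ∂m, ‖v z‖ ≤ 1) (hg : ContinuousOn g (ball 0 1)) {C : ℝ}
    (hC : ∀ w ∈ ball 0 1, ‖g w‖ ≤ C)
    (hG : ∀ᵐ z ∂m, Tendsto (fun r : ℝ => g (r * z)) (𝓝[<] 1) (𝓝 (G z))) :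
    Tendsto (fun r : ℝ => ∫ z, v z * g (r * z) ∂m) (𝓝[<] 1) (𝓝 (∫ z, v z * G z ∂m)) := by
  have hr : ∀ᶠ r : ℝ in 𝓝[<] 1, r ∈ Ioo 0 1 := Ioo_mem_nhdsLT one_pos
  refine tendsto_integral_filter_of_dominated_convergence (fun _ => C) ?_ ?_
    (integrable_const C) (hG.mono fun z hz => hz.const_mul (v z))
  · filter_upwards [hr] with r hr
    exact hv.mul (aestronglyMeasurable_comp_ofReal_mul hg hr.1.le hr.2)
  · filter_upwards [hr] with r hr
    filter_upwards [m_ae_norm_eq_one, hv1] with z hz hvz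
    have hrz : (r : ℂ) * z ∈ ball 0 1 :=
      mapsTo_ofReal_mul_closedBall hr.1.le hr.2 (by simp [hz])
    rw [norm_mul]
    exact (mul_le_of_le_one_left (norm_nonneg _) hvz).trans (hC _ hrz)

lemma integral_eq_apply_zero_of_tendsto_radial (hg : DifferentiableOn ℂ g (ball 0 1)) {C : ℝ}
    (hC : ∀ w ∈ ball 0 1, ‖g w‖ ≤ C)
    (hG : ∀ᵐ z ∂m, Tendsto (fun r : ℝ => g (r * z)) (𝓝[<] 1) (𝓝 (G z))) :
    ∫ z, G z ∂m = g 0 := by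
  have hlim := tendsto_integral_mul_comp_ofReal_mul (v := fun _ => 1) aestronglyMeasurable_const
    (by simp) hg.continuousOn hC hG
  simp only [one_mul] at hlim
  refine tendsto_nhds_unique hlim (tendsto_const_nhds.congr' ?_)
  filter_upwards [Ioo_mem_nhdsLT one_pos] with r hr
  simpa using (integral_m_eq_apply_zero (hg.diffContOnCl_comp_ofReal_mul hr.1.le hr.2)).symm

lemma integral_conj_mul_eq_deriv_of_tendsto_radial (hg : DifferentiableOn ℂ g (ball 0 1))
    {C : ℝ} (hC : ∀ w ∈ ball 0 1, ‖g w‖ ≤ C)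
    (hG : ∀ᵐ z ∂m, Tendsto (fun r : ℝ => g (r * z)) (𝓝[<] 1) (𝓝 (G z))) :
    ∫ z, conj z * G z ∂m = deriv g 0 := by
  have hlim := tendsto_integral_mul_comp_ofReal_mul continuous_conj.aestronglyMeasurable
    (m_ae_norm_eq_one.mono fun z hz => by simp [hz]) hg.continuousOn hC hG
  refine tendsto_nhds_unique hlim ?_
  have hr : Tendsto (fun r : ℝ => (r : ℂ) * deriv g 0) (𝓝[<] 1) (𝓝 (deriv g 0)) := by
    simpa using ((continuous_ofReal.tendsto 1).mono_left nhdsWithin_le_nhds).mul_const (deriv g 0)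
  refine hr.congr' ?_
  filter_upwards [Ioo_mem_nhdsLT one_pos] with r hr
  rw [integral_m_conj_mul_eq_deriv (hg.diffContOnCl_comp_ofReal_mul hr.1.le hr.2),
    deriv_comp_mul_left, mul_zero, smul_eq_mul]

end RadialLimits

lemma pow_mul_conj_pow_of_norm_eq_one {w : ℂ} (hw : ‖w‖ = 1) (i k : ℕ) :
    w ^ i * conj w ^ k = if k ≤ i then w ^ (i - k) else conj w ^ (k - i) := by
  have hwc : w * conj w = 1 := by simp [mul_conj, normSq_eq_norm_sq, hw]
  split_ifs with h
  · obtain ⟨j, rfl⟩ := Nat.exists_eq_add_of_le h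
    rw [Nat.add_sub_cancel_left, pow_add, mul_right_comm, ← mul_pow, hwc, one_pow, one_mul]
  · obtain ⟨j, rfl⟩ := Nat.exists_eq_add_of_le (not_le.1 h).le
    rw [Nat.add_sub_cancel_left, pow_add, ← mul_assoc, ← mul_pow, hwc, one_pow, one_mul]

noncomputable def trigPoly : Submodule ℂ (ℂ → ℂ) :=
  Submodule.span ℂ (range fun p : ℕ × ℕ => fun z => z ^ p.1 * conj z ^ p.2)

lemma continuous_of_mem_trigPoly {t : ℂ → ℂ} (ht : t ∈ trigPoly) : Continuous t := by
  induction ht using Submodule.span_induction with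
  | mem x hx =>
    obtain ⟨p, rfl⟩ := hx
    fun_prop
  | zero => exact continuous_const
  | add x y _ _ hx hy => exact hx.add hy
  | smul c x _ hx => exact hx.const_smul c

lemma exists_mem_trigPoly_norm_sub_lt {g : ℂ → ℂ} (hg : ContinuousOn g (sphere 0 1)) {ε : ℝ}
    (hε : 0 < ε) : ∃ t ∈ trigPoly, ∀ z ∈ sphere (0 : ℂ) 1, ‖g z - t z‖ < ε := by
  let S := sphere (0 : ℂ) 1
  let ζ : C(S, ℂ) := ⟨(↑), continuous_subtype_val⟩
  let A := StarAlgebra.adjoin ℂ ({ζ} : Set C(S, ℂ))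
  have hdense : A.topologicalClosure = ⊤ := by
    refine ContinuousMap.starSubalgebra_topologicalClosure_eq_top_of_separatesPoints A ?_
    exact fun x y hxy =>
      ⟨ζ, ⟨ζ, StarAlgebra.subset_adjoin ℂ _ rfl, rfl⟩, fun h => hxy (Subtype.ext h)⟩
  let gS : C(S, ℂ) := ⟨fun z => g z, hg.comp_continuous continuous_subtype_val Subtype.prop⟩
  have hgS : gS ∈ closure (A : Set C(S, ℂ)) := by
    rw [← StarSubalgebra.topologicalClosure_coe, hdense]
    trivial
  obtain ⟨a, haA, hga⟩ := Metric.mem_closure_iff.1 hgS ε hε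
  -- every element of `A` is the restriction of a trigonometric polynomial
  let res : (ℂ → ℂ) →ₗ[ℂ] (S → ℂ) := LinearMap.funLeft ℂ ℂ (↑)
  have hA : (⇑a : S → ℂ) ∈ trigPoly.map res := by
    have ha : a ∈ Subalgebra.toSubmodule A.toSubalgebra := haA
    rw [StarAlgebra.adjoin_eq_span, star_singleton, singleton_union] at ha
    refine Submodule.span_induction (fun x hx => ?_) (by simp) (fun x y _ _ hx hy => by
      simpa using Submodule.add_mem _ hx hy) (fun c x _ hx => by
      simpa using Submodule.smul_mem _ c hx) ha
    obtain ⟨i, k, rfl⟩ := (Submonoid.mem_closure_pair _ _ _).1 hx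
    exact ⟨_, Submodule.subset_span ⟨(i, k), rfl⟩, rfl⟩
  obtain ⟨t, ht, hta⟩ := hA
  refine ⟨t, ht, fun z hz => ?_⟩
  calc ‖g z - t z‖ = dist (gS ⟨z, hz⟩) (a ⟨z, hz⟩) := by
        rw [dist_eq_norm, ← congr_fun hta ⟨z, hz⟩]; rfl
    _ ≤ dist gS a := ContinuousMap.dist_apply_le_dist _
    _ < ε := hga

section MapEq

variable {α E : Type*} [MeasurableSpace α] [NormedAddCommGroup E] {μ : Measure α} {T : α → α}

lemma integral_comp_of_map_eq [NormedSpace ℝ E] (hT : AEMeasurable T μ) (hmap : μ.map T = μ)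
    {φ : α → E} (hφ : AEStronglyMeasurable φ μ) : ∫ x, φ (T x) ∂μ = ∫ x, φ x ∂μ := by
  rw [← integral_map hT (hmap.symm ▸ hφ), hmap]

lemma MeasureTheory.Integrable.comp_of_map_eq (hT : AEMeasurable T μ) (hmap : μ.map T = μ)
    {φ : α → E} (hφ : Integrable φ μ) : Integrable (fun x => φ (T x)) μ :=
  (hmap.symm ▸ hφ : Integrable φ (μ.map T)).comp_aemeasurable hT

lemma aemeasurable_iterate_of_map_eq (hT : AEMeasurable T μ) (hmap : μ.map T = μ) (n : ℕ) :
    AEMeasurable T^[n] μ := by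
  induction n with
  | zero => exact aemeasurable_id
  | succ n ih => exact (hmap.symm ▸ ih : AEMeasurable T^[n] (μ.map T)).comp_aemeasurable hT

lemma map_iterate_of_map_eq (hT : AEMeasurable T μ) (hmap : μ.map T = μ) (n : ℕ) :
    μ.map T^[n] = μ := by
  induction n with
  | zero => exact Measure.map_id
  | succ n ih =>
    rw [Function.iterate_succ, ← AEMeasurable.map_map_of_aemeasurable
      (hmap.symm ▸ aemeasurable_iterate_of_map_eq hT hmap n) hT, hmap, ih]

end MapEq

section Transfer

variable {u F : ℂ → ℂ} {κ : ℂ}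

lemma eq_mul_of_forall_approx {x y : ℂ}
    (h : ∀ δ > 0, ∃ x' y', ‖x - x'‖ ≤ δ ∧ ‖y - y'‖ ≤ δ ∧ x' = κ * y') : x = κ * y := by
  refine eq_of_forall_dist_le fun ε hε => ?_
  obtain ⟨x', y', hx, hy, rfl⟩ := h (ε / (1 + ‖κ‖)) (by positivity)
  calc dist x (κ * y) = ‖(x - κ * y') + κ * (y' - y)‖ := by rw [dist_eq_norm]; ring_nf
    _ ≤ ε / (1 + ‖κ‖) + ‖κ‖ * (ε / (1 + ‖κ‖)) := by
      refine (norm_add_le _ _).trans (add_le_add hx ?_)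
      rw [norm_mul, norm_sub_rev]
      exact mul_le_mul_of_nonneg_left hy (norm_nonneg κ)
    _ = ε := by field_simp

lemma integrable_comp_of_continuous (hF : AEStronglyMeasurable F m)
    (hF1 : ∀ᵐ z ∂m, ‖F z‖ = 1) {h : ℂ → ℂ} (hh : Continuous h) :
    Integrable (fun z => h (F z)) m := by
  obtain ⟨C, hC⟩ := (isCompact_sphere (0 : ℂ) 1).exists_bound_of_continuousOn hh.continuousOn
  exact Integrable.of_bound (hh.comp_aestronglyMeasurable hF) C
    (hF1.mono fun z hz => hC _ (by simpa using hz))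

lemma integral_norm_sub_comp_le (hF1 : ∀ᵐ z ∂m, ‖F z‖ = 1) {a b : ℂ → ℂ} {δ : ℝ}
    (hab : ∀ z ∈ sphere (0 : ℂ) 1, ‖a z - b z‖ ≤ δ) :
    ∫ z, ‖a (F z) - b (F z)‖ ∂m ≤ δ := by
  refine (Real.le_norm_self _).trans ((norm_integral_le_of_norm_le_const (C := δ) ?_).trans
    (by simp))
  exact hF1.mono fun z hz => by simpa using hab _ (by simpa using hz)

lemma norm_integral_mul_sub_mul_le (hu : AEStronglyMeasurable u m) (hu1 : ∀ᵐ z ∂m, ‖u z‖ ≤ 1)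
    {a b : ℂ → ℂ} (ha : Integrable a m) (hb : Integrable b m) :
    ‖∫ z, u z * a z ∂m - ∫ z, u z * b z ∂m‖ ≤ ∫ z, ‖a z - b z‖ ∂m := by
  rw [← integral_sub (ha.bdd_mul hu hu1) (hb.bdd_mul hu hu1)]
  refine norm_integral_le_of_norm_le (ha.sub hb).norm (hu1.mono fun z hz => ?_)
  rw [← mul_sub, norm_mul]
  exact mul_le_of_le_one_left (norm_nonneg _) hz

lemma integral_mul_monomial_comp (hF1 : ∀ᵐ z ∂m, ‖F z‖ = 1)
    (hpow : ∀ n : ℕ, ∫ z, u z * F z ^ n ∂m = κ * ∫ z, u z * z ^ n ∂m)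
    (hconj : ∀ n : ℕ, ∫ z, u z * conj (F z) ^ n ∂m = κ * ∫ z, u z * conj z ^ n ∂m) (i k : ℕ) :
    ∫ z, u z * (F z ^ i * conj (F z) ^ k) ∂m = κ * ∫ z, u z * (z ^ i * conj z ^ k) ∂m := by
  have hred : ∀ G : ℂ → ℂ, (∀ᵐ z ∂m, ‖G z‖ = 1) →
      ∫ z, u z * (G z ^ i * conj (G z) ^ k) ∂m = if k ≤ i then ∫ z, u z * G z ^ (i - k) ∂m
        else ∫ z, u z * conj (G z) ^ (k - i) ∂m := fun G hG => by
    split_ifs with h <;>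
      exact integral_congr_ae (hG.mono fun z hz => by simp [pow_mul_conj_pow_of_norm_eq_one hz, h])
  rw [hred F hF1, hred _ m_ae_norm_eq_one]
  split_ifs
  exacts [hpow _, hconj _]

lemma integral_mul_comp_eq_of_mem_trigPoly (hu : AEStronglyMeasurable u m)
    (hu1 : ∀ᵐ z ∂m, ‖u z‖ ≤ 1) (hF : AEStronglyMeasurable F m) (hF1 : ∀ᵐ z ∂m, ‖F z‖ = 1)
    (hpow : ∀ n : ℕ, ∫ z, u z * F z ^ n ∂m = κ * ∫ z, u z * z ^ n ∂m)
    (hconj : ∀ n : ℕ, ∫ z, u z * conj (F z) ^ n ∂m = κ * ∫ z, u z * conj z ^ n ∂m)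
    {t : ℂ → ℂ} (ht : t ∈ trigPoly) : ∫ z, u z * t (F z) ∂m = κ * ∫ z, u z * t z ∂m := by
  have hint : ∀ G : ℂ → ℂ, AEStronglyMeasurable G m → (∀ᵐ z ∂m, ‖G z‖ = 1) →
      ∀ x ∈ trigPoly, Integrable (fun z => u z * x (G z)) m := fun G hG hG1 x hx =>
    (integrable_comp_of_continuous hG hG1 (continuous_of_mem_trigPoly hx)).bdd_mul hu hu1
  have hintF := hint F hF hF1
  have hint1 : ∀ x ∈ trigPoly, Integrable (fun z => u z * x z) m :=
    hint _ aestronglyMeasurable_id m_ae_norm_eq_one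
  induction ht using Submodule.span_induction with
  | mem x hx =>
    obtain ⟨⟨i, k⟩, rfl⟩ := hx
    exact integral_mul_monomial_comp hF1 hpow hconj i k
  | zero => simp
  | add x y hx hy ihx ihy =>
    simp only [Pi.add_apply, mul_add]
    rw [integral_add (hintF x hx) (hintF y hy), integral_add (hint1 x hx) (hint1 y hy), ihx, ihy,
      mul_add]
  | smul c x _ ihx =>
    simp only [Pi.smul_apply, smul_eq_mul, mul_left_comm _ c, integral_const_mul, ihx]

lemma integral_mul_comp_eq_of_continuous (hu : AEStronglyMeasurable u m)
    (hu1 : ∀ᵐ z ∂m, ‖u z‖ ≤ 1) (hF : AEStronglyMeasurable F m) (hF1 : ∀ᵐ z ∂m, ‖F z‖ = 1)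
    (hpow : ∀ n : ℕ, ∫ z, u z * F z ^ n ∂m = κ * ∫ z, u z * z ^ n ∂m)
    (hconj : ∀ n : ℕ, ∫ z, u z * conj (F z) ^ n ∂m = κ * ∫ z, u z * conj z ^ n ∂m)
    {g : ℂ → ℂ} (hg : Continuous g) : ∫ z, u z * g (F z) ∂m = κ * ∫ z, u z * g z ∂m := by
  refine eq_mul_of_forall_approx fun δ hδ => ?_
  obtain ⟨t, ht, hgt⟩ := exists_mem_trigPoly_norm_sub_lt hg.continuousOn hδ
  have hgt : ∀ z ∈ sphere (0 : ℂ) 1, ‖g z - t z‖ ≤ δ := fun z hz => (hgt z hz).le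
  have htc := continuous_of_mem_trigPoly ht
  refine ⟨_, _, ?_, ?_, integral_mul_comp_eq_of_mem_trigPoly hu hu1 hF hF1 hpow hconj ht⟩
  · exact (norm_integral_mul_sub_mul_le hu hu1 (integrable_comp_of_continuous hF hF1 hg)
      (integrable_comp_of_continuous hF hF1 htc)).trans (integral_norm_sub_comp_le hF1 hgt)
  · exact (norm_integral_mul_sub_mul_le hu hu1
      (integrable_comp_of_continuous aestronglyMeasurable_id m_ae_norm_eq_one hg)
      (integrable_comp_of_continuous aestronglyMeasurable_id m_ae_norm_eq_one htc)).trans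
      (integral_norm_sub_comp_le m_ae_norm_eq_one hgt)

lemma integral_mul_comp_eq_of_integrable (hu : AEStronglyMeasurable u m)
    (hu1 : ∀ᵐ z ∂m, ‖u z‖ ≤ 1) (hF : AEMeasurable F m) (hmap : m.map F = m)
    (hcont : ∀ g : ℂ → ℂ, Continuous g → ∫ z, u z * g (F z) ∂m = κ * ∫ z, u z * g z ∂m)
    {ψ : ℂ → ℂ} (hψ : Integrable ψ m) : ∫ z, u z * ψ (F z) ∂m = κ * ∫ z, u z * ψ z ∂m := by
  refine eq_mul_of_forall_approx fun δ hδ => ?_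
  obtain ⟨g, -, hψg, hg, hgi⟩ := hψ.exists_hasCompactSupport_integral_sub_le hδ
  refine ⟨_, _, ?_, norm_integral_mul_sub_mul_le hu hu1 hψ hgi |>.trans hψg, hcont g hg⟩
  refine (norm_integral_mul_sub_mul_le hu hu1 (hψ.comp_of_map_eq hF hmap)
    (hgi.comp_of_map_eq hF hmap)).trans ?_
  rwa [integral_comp_of_map_eq hF hmap (φ := fun z => ‖ψ z - g z‖)
    (hψ.sub hgi).aestronglyMeasurable.norm]

end Transfer

structure IsInnerFixingZero (f F : ℂ → ℂ) : Prop where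
  differentiableOn : DifferentiableOn ℂ f (ball 0 1)
  mapsTo : MapsTo f (ball 0 1) (ball 0 1)
  map_zero : f 0 = 0
  tendsto_radial : ∀ᵐ z ∂m, Tendsto (fun r : ℝ => f (r * z)) (𝓝[<] 1) (𝓝 (F z))
  norm_eq_one : ∀ᵐ z ∂m, ‖F z‖ = 1

namespace IsInnerFixingZero

variable {f F : ℂ → ℂ}

lemma aestronglyMeasurable (hf : IsInnerFixingZero f F) : AEStronglyMeasurable F m :=
  aestronglyMeasurable_of_tendsto_radial hf.differentiableOn.continuousOn hf.tendsto_radial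

lemma norm_pow_le_one (hf : IsInnerFixingZero f F) (n : ℕ) : ∀ w ∈ ball (0 : ℂ) 1, ‖f w ^ n‖ ≤ 1 :=
  fun w hw => by
    rw [norm_pow]
    exact pow_le_one₀ (norm_nonneg _) (mem_ball_zero_iff.1 (hf.mapsTo hw)).le

lemma integral_pow (hf : IsInnerFixingZero f F) (n : ℕ) : ∫ z, F z ^ n ∂m = ∫ z, z ^ n ∂m := by
  rw [integral_eq_apply_zero_of_tendsto_radial (hf.differentiableOn.pow n) (hf.norm_pow_le_one n)
      (hf.tendsto_radial.mono fun z hz => hz.pow n),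
    integral_m_eq_apply_zero (differentiable_pow n).differentiableOn.diffContOnCl, Pi.pow_apply,
    hf.map_zero]

lemma integral_id_mul_pow (hf : IsInnerFixingZero f F) (n : ℕ) :
    ∫ z, z * F z ^ n ∂m = conj (deriv f 0) * ∫ z, z * z ^ n ∂m := by
  have hlim : ∀ᵐ z ∂m, Tendsto (fun r : ℝ => r * z * f (r * z) ^ n) (𝓝[<] 1) (𝓝 (z * F z ^ n)) :=
    hf.tendsto_radial.mono fun z hz => by
      refine Tendsto.mul ?_ (hz.pow n)
      simpa using ((continuous_ofReal.tendsto 1).mono_left nhdsWithin_le_nhds).mul_const z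
  have hbound : ∀ w ∈ ball (0 : ℂ) 1, ‖w * f w ^ n‖ ≤ 1 := fun w hw => by
    rw [norm_mul]
    exact mul_le_one₀ (mem_ball_zero_iff.1 hw).le (norm_nonneg _) (hf.norm_pow_le_one n w hw)
  rw [integral_eq_apply_zero_of_tendsto_radial (g := fun w => w * f w ^ n)
      (differentiableOn_id.mul (hf.differentiableOn.pow n)) hbound hlim,
    integral_m_eq_apply_zero (by fun_prop : Differentiable ℂ fun z : ℂ => z * z ^ n).diffContOnCl]
  simp

lemma integral_conj_mul_pow (hf : IsInnerFixingZero f F) (n : ℕ) :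
    ∫ z, conj z * F z ^ n ∂m = deriv f 0 * ∫ z, conj z * z ^ n ∂m := by
  have hd : DifferentiableAt ℂ f 0 :=
    hf.differentiableOn.differentiableAt (isOpen_ball.mem_nhds (mem_ball_self one_pos))
  rw [integral_conj_mul_eq_deriv_of_tendsto_radial (hf.differentiableOn.pow n)
      (hf.norm_pow_le_one n) (hf.tendsto_radial.mono fun z hz => hz.pow n),
    integral_m_conj_mul_eq_deriv (differentiable_pow n).differentiableOn.diffContOnCl,
    (hd.hasDerivAt.pow n).deriv, hf.map_zero]
  simp only [deriv_pow_field]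
  ring

lemma integral_conj_pow (hf : IsInnerFixingZero f F) (n : ℕ) :
    ∫ z, conj (F z) ^ n ∂m = ∫ z, conj z ^ n ∂m := by
  simp only [← map_pow, integral_conj, hf.integral_pow]

lemma integral_id_mul_conj_pow (hf : IsInnerFixingZero f F) (n : ℕ) :
    ∫ z, z * conj (F z) ^ n ∂m = conj (deriv f 0) * ∫ z, z * conj z ^ n ∂m := by
  have h := congrArg conj (hf.integral_conj_mul_pow n)
  simpa [← integral_conj] using h

lemma integral_comp (hf : IsInnerFixingZero f F) {g : ℂ → ℂ} (hg : Continuous g) :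
    ∫ z, g (F z) ∂m = ∫ z, g z ∂m := by
  simpa using integral_mul_comp_eq_of_continuous (u := 1) (κ := 1) aestronglyMeasurable_const
    (by simp) hf.aestronglyMeasurable hf.norm_eq_one (by simpa using hf.integral_pow)
    (by simpa using hf.integral_conj_pow) hg

lemma map_eq (hf : IsInnerFixingZero f F) : m.map F = m := by
  refine ext_of_forall_integral_eq_of_IsFiniteMeasure fun g => ?_
  rw [integral_map hf.aestronglyMeasurable.aemeasurable g.continuous.aestronglyMeasurable]
  have h := hf.integral_comp (g := fun z => (g z : ℂ)) (by fun_prop)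
  rwa [integral_complex_ofReal, integral_complex_ofReal, ofReal_inj] at h

lemma integral_id_mul_comp (hf : IsInnerFixingZero f F) {ψ : ℂ → ℂ} (hψ : Integrable ψ m) :
    ∫ z, z * ψ (F z) ∂m = conj (deriv f 0) * ∫ z, z * ψ z ∂m := by
  have hu1 : ∀ᵐ z ∂m, ‖z‖ ≤ 1 := m_ae_norm_eq_one.mono fun z hz => hz.le
  refine integral_mul_comp_eq_of_integrable aestronglyMeasurable_id hu1
    hf.aestronglyMeasurable.aemeasurable hf.map_eq (fun g hg => ?_) hψ
  exact integral_mul_comp_eq_of_continuous aestronglyMeasurable_id hu1 hf.aestronglyMeasurable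
    hf.norm_eq_one hf.integral_id_mul_pow hf.integral_id_mul_conj_pow hg

lemma aemeasurable_iterate (hf : IsInnerFixingZero f F) (n : ℕ) : AEMeasurable F^[n] m :=
  aemeasurable_iterate_of_map_eq hf.aestronglyMeasurable.aemeasurable hf.map_eq n

lemma map_iterate (hf : IsInnerFixingZero f F) (n : ℕ) : m.map F^[n] = m :=
  map_iterate_of_map_eq hf.aestronglyMeasurable.aemeasurable hf.map_eq n

lemma aestronglyMeasurable_iterate (hf : IsInnerFixingZero f F) (n : ℕ) :
    AEStronglyMeasurable F^[n] m :=
  (hf.aemeasurable_iterate n).aestronglyMeasurable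

lemma integral_comp_iterate (hf : IsInnerFixingZero f F) (n : ℕ) {φ : ℂ → ℂ}
    (hφ : AEStronglyMeasurable φ m) : ∫ z, φ (F^[n] z) ∂m = ∫ z, φ z ∂m :=
  integral_comp_of_map_eq (hf.aemeasurable_iterate n) (hf.map_iterate n) hφ

lemma ae_norm_iterate_eq_one (hf : IsInnerFixingZero f F) (n : ℕ) :
    ∀ᵐ z ∂m, ‖F^[n] z‖ = 1 :=
  ae_of_ae_map (hf.aemeasurable_iterate n) ((hf.map_iterate n).symm ▸ m_ae_norm_eq_one)

lemma integral_id_mul_comp_iterate (hf : IsInnerFixingZero f F) (e : ℕ) {ψ : ℂ → ℂ}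
    (hψ : Integrable ψ m) :
    ∫ z, z * ψ (F^[e] z) ∂m = conj (deriv f 0) ^ e * ∫ z, z * ψ z ∂m := by
  induction e with
  | zero => simp
  | succ e ih =>
    simp only [Function.iterate_succ_apply]
    rw [hf.integral_id_mul_comp (ψ := fun w => ψ (F^[e] w))
      (hψ.comp_of_map_eq (hf.aemeasurable_iterate e) (hf.map_iterate e)), ih, pow_succ']
    ring

lemma integral_conj_mul_comp_iterate (hf : IsInnerFixingZero f F) (e : ℕ) {ψ : ℂ → ℂ}
    (hψ : Integrable ψ m) :
    ∫ z, conj z * ψ (F^[e] z) ∂m = deriv f 0 ^ e * ∫ z, conj z * ψ z ∂m := by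
  have hψ' : Integrable (fun z => conj (ψ z)) m :=
    hψ.mono (continuous_conj.comp_aestronglyMeasurable hψ.aestronglyMeasurable)
      (Eventually.of_forall fun z => (RCLike.norm_conj _).le)
  have h := congrArg conj (hf.integral_id_mul_comp_iterate e hψ')
  simpa [← integral_conj] using h

lemma integrable_iterate_mul_iterate_mul (hf : IsInnerFixingZero f F) (p q : ℕ) {φ : ℂ → ℂ}
    (hφ : AEStronglyMeasurable φ m) (hφ1 : ∀ᵐ z ∂m, ‖φ z‖ ≤ 1) :
    Integrable (fun z => φ z * F^[p] z * F^[q] z) m := by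
  refine Integrable.of_bound ((hφ.mul (hf.aestronglyMeasurable_iterate p)).mul
    (hf.aestronglyMeasurable_iterate q)) 1 ?_
  filter_upwards [hφ1, hf.ae_norm_iterate_eq_one p, hf.ae_norm_iterate_eq_one q] with z h hp hq
  simpa [hp, hq] using h

lemma integral_iterate_mul_iterate (hf : IsInnerFixingZero f F) (p q : ℕ) :
    ∫ z, F^[p] z * F^[q] z ∂m = 0 := by
  wlog hpq : p ≤ q generalizing p q
  · simpa [mul_comm] using this q p (not_le.1 hpq).le
  obtain ⟨s, rfl⟩ := Nat.exists_eq_add_of_le' hpq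
  have hid : Integrable (fun z : ℂ => z) m :=
    Integrable.of_bound aestronglyMeasurable_id 1 (m_ae_norm_eq_one.mono fun z hz => hz.le)
  simp only [Function.iterate_add_apply]
  rw [hf.integral_comp_iterate p (φ := fun w => w * F^[s] w)
      (aestronglyMeasurable_id.mul (hf.aestronglyMeasurable_iterate s)),
    hf.integral_id_mul_comp_iterate s hid,
    integral_m_eq_apply_zero (by fun_prop : Differentiable ℂ fun z : ℂ => z * z).diffContOnCl]
  simp

lemma integral_conj_mul_self_mul_iterate_mul_iterate (hf : IsInnerFixingZero f F) (p q : ℕ) :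
    ∫ z, conj z * (z * F^[p] z * F^[q] z) ∂m = 0 := by
  rw [← hf.integral_iterate_mul_iterate p q]
  refine integral_congr_ae (m_ae_norm_eq_one.mono fun z hz => ?_)
  simp [← mul_assoc, conj_mul', hz]

lemma integral_iterate_mul_conj_mul_iterate_mul_iterate (hf : IsInnerFixingZero f F)
    (e p q : ℕ) : ∫ z, F^[e] z * conj z * F^[p + e] z * F^[q + e] z ∂m = 0 := by
  have hψ := hf.integrable_iterate_mul_iterate_mul (φ := fun z => z) p q aestronglyMeasurable_id
    (m_ae_norm_eq_one.mono fun z hz => hz.le)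
  have key := hf.integral_conj_mul_comp_iterate e hψ
  rw [hf.integral_conj_mul_self_mul_iterate_mul_iterate, mul_zero] at key
  rw [← key]
  simp only [Function.iterate_add_apply]
  congr 1 with z
  ring

lemma integral_mul_conj_iterate_mul_iterate_mul_iterate (hf : IsInnerFixingZero f F)
    (e p q : ℕ) : ∫ z, z * conj (F^[e] z) * F^[p + e] z * F^[q + e] z ∂m = 0 := by
  have hψ := hf.integrable_iterate_mul_iterate_mul p q continuous_conj.aestronglyMeasurable
    (m_ae_norm_eq_one.mono fun z hz => by simp [hz])
  have key := hf.integral_id_mul_comp_iterate e hψ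
  have h0 : ∫ z, z * (conj z * F^[p] z * F^[q] z) ∂m = 0 := by
    rw [← hf.integral_conj_mul_self_mul_iterate_mul_iterate p q]
    congr 1 with z
    ring
  rw [h0, mul_zero] at key
  rw [← key]
  simp only [Function.iterate_add_apply]
  congr 1 with z
  ring

lemma integral_iterate_mul_conj_iterate_mul_iterate_mul_iterate (hf : IsInnerFixingZero f F)
    {a b p q : ℕ} (h : max a b < min p q) :
    ∫ z, F^[a] z * conj (F^[b] z) * F^[p] z * F^[q] z ∂m = 0 := by
  have hit := hf.aestronglyMeasurable_iterate
  rcases le_or_gt b a with hba | hab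
  · obtain ⟨e, rfl⟩ : ∃ e, a = e + b := ⟨a - b, by omega⟩
    obtain ⟨p, rfl⟩ : ∃ p', p = p' + e + b := ⟨p - (e + b), by omega⟩
    obtain ⟨q, rfl⟩ : ∃ q', q = q' + e + b := ⟨q - (e + b), by omega⟩
    simp only [Function.iterate_add_apply F e b, Function.iterate_add_apply F (p + e) b,
      Function.iterate_add_apply F (q + e) b]
    refine (hf.integral_comp_iterate b
      (φ := fun w => F^[e] w * conj w * F^[p + e] w * F^[q + e] w) (by fun_prop)).trans ?_
    exact hf.integral_iterate_mul_conj_mul_iterate_mul_iterate e p q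
  · obtain ⟨e, rfl⟩ : ∃ e, b = e + a := ⟨b - a, by omega⟩
    obtain ⟨p, rfl⟩ : ∃ p', p = p' + e + a := ⟨p - (e + a), by omega⟩
    obtain ⟨q, rfl⟩ : ∃ q', q = q' + e + a := ⟨q - (e + a), by omega⟩
    simp only [Function.iterate_add_apply F e a, Function.iterate_add_apply F (p + e) a,
      Function.iterate_add_apply F (q + e) a]
    refine (hf.integral_comp_iterate a
      (φ := fun w => w * conj (F^[e] w) * F^[p + e] w * F^[q + e] w) (by fun_prop)).trans ?_
    exact hf.integral_mul_conj_iterate_mul_iterate_mul_iterate e p q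

end IsInnerFixingZero

theorem stmt6_general (f F : ℂ → ℂ)
    (hf : DifferentiableOn ℂ f (Metric.ball 0 1))
    (hmap : Set.MapsTo f (Metric.ball 0 1) (Metric.ball 0 1))
    (h0 : f 0 = 0)
    (hbd : ∀ᵐ z ∂m, Filter.Tendsto (fun r : ℝ => f ((r : ℂ) * z))
      (nhdsWithin 1 (Set.Iio 1)) (nhds (F z)))
    (hinner : ∀ᵐ z ∂m, ‖F z‖ = 1)
    (ε : ℤ) (hε : ε = 1 ∨ ε = -1)
    (n₁ n₂ n₃ n₄ : ℕ)
    (hlt : max n₁ n₂ < min n₃ n₄) :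
    ∫ z, spow F ε n₁ z * spow F (-ε) n₂ z * F^[n₃] z * F^[n₄] z ∂m = 0 := by
  have hF : IsInnerFixingZero f F := ⟨hf, hmap, h0, hbd, hinner⟩
  rcases hε with rfl | rfl
  · simpa [spow] using hF.integral_iterate_mul_conj_iterate_mul_iterate_mul_iterate hlt
  · have hlt' : max n₂ n₁ < min n₃ n₄ := max_comm n₁ n₂ ▸ hlt
    simpa [spow, mul_comm (conj (F^[n₁] _))] using
      hF.integral_iterate_mul_conj_iterate_mul_iterate_mul_iterate hlt'

theorem stmt6 (f F : ℂ → ℂ)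
    (hf : DifferentiableOn ℂ f (Metric.ball 0 1))
    (hmap : Set.MapsTo f (Metric.ball 0 1) (Metric.ball 0 1))
    (h0 : f 0 = 0)
    (hbd : ∀ᵐ z ∂m, Filter.Tendsto (fun r : ℝ => f ((r : ℂ) * z))
      (nhdsWithin 1 (Set.Iio 1)) (nhds (F z)))
    (hinner : ∀ᵐ z ∂m, ‖F z‖ = 1)
    (hrot : ¬ ∃ c : ℂ, Set.EqOn f (fun w => c * w) (Metric.ball 0 1))
    (ε : ℤ) (hε : ε = 1 ∨ ε = -1)
    (n₁ n₂ n₃ n₄ : ℕ) (h1 : 0 < n₁) (h2 : 0 < n₂) (h3 : 0 < n₃) (h4 : 0 < n₄)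
    (hlt : max n₁ n₂ < min n₃ n₄) :
    ∫ z, spow F ε n₁ z * spow F (-ε) n₂ z * F^[n₃] z * F^[n₄] z ∂m = 0 :=
  stmt6_general f F hf hmap h0 hbd hinner ε hε n₁ n₂ n₃ n₄ hlt
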